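/- arXiv:math/0207111 — 2 statements merged into one kernel-verified Lean document; each statement's English description precedes it below -/
import Mathlib

section
/- Let H: H₁ → H₂ ← H₃ be Hilbert spaces with densely defined closed unbounded operators T : H₁ → H₂ and S : H₂ → H₃ satisfying S∘T = 0. Let F ⊆ H₂ be a closed subspace containing the range of T. If there is a constant c > 0 such that ‖α‖₂² ≤ c(‖T*α‖₁² + ‖Sα‖₃²) for all α ∈ Dom(T*) ∩ Dom(S) ∩ F, then for every β in the range of T* there exists α ∈ Dom(T*) with T*α = β and ‖α‖₂ ≤ c^{1/2}·‖β‖₁. -/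
/-! The solution of minimal norm: project a preimage `γ` of `β` under `T*` onto the closure of
`Im T`. The discarded part lies in `(Im T)ᗮ = ker T*`, so the projection `α` is still a preimage
of `β`. Since `S` is closed and vanishes on `Im T`, it vanishes on its closure, so `Sα = 0`;
and `α ∈ F` because `F` is closed. The a priori estimate at `α` then reads `‖α‖² ≤ c‖β‖²`. -/

open scoped InnerProductSpace

namespace LinearPMap

section Adjoint

variable {𝕜 E F : Type*} [RCLike 𝕜]
  [NormedAddCommGroup E] [InnerProductSpace 𝕜 E] [CompleteSpace E]
  [NormedAddCommGroup F] [InnerProductSpace 𝕜 F]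
  {T : E →ₗ.[𝕜] F}

theorem mem_adjoint_domain_of_mem_orthogonal_range {y : F}
    (hy : y ∈ (LinearMap.range T.toFun)ᗮ) : y ∈ T†.domain :=
  mem_adjoint_domain_of_exists y
    ⟨0, fun x => (inner_zero_left _).trans (inner_eq_zero_symm.mp (hy (T x) ⟨x, rfl⟩)).symm⟩

theorem adjoint_apply_of_mem_orthogonal_range (hT : Dense (T.domain : Set E)) (y : T†.domain)
    (hy : (y : F) ∈ (LinearMap.range T.toFun)ᗮ) : T† y = 0 :=
  adjoint_apply_eq hT y
    fun x => (inner_zero_left _).trans (inner_eq_zero_symm.mp (hy (T x) ⟨x, rfl⟩)).symm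

theorem exists_mem_closure_range_adjoint_apply_eq [CompleteSpace F]
    (hT : Dense (T.domain : Set E)) (y : T†.domain) :
    ∃ x ∈ (LinearMap.range T.toFun).topologicalClosure,
      ∃ hx : x ∈ T†.domain, T† ⟨x, hx⟩ = T† y := by
  set K := (LinearMap.range T.toFun).topologicalClosure
  have : CompleteSpace K := (Submodule.isClosed_topologicalClosure _).completeSpace_coe
  have hδ : (y : F) - K.starProjection y ∈ (LinearMap.range T.toFun)ᗮ := by
    rw [← Submodule.orthogonal_closure]
    exact K.sub_starProjection_mem_orthogonal y
  let δ : T†.domain := ⟨_, mem_adjoint_domain_of_mem_orthogonal_range hδ⟩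
  have hx : K.starProjection y = ((y - δ : T†.domain) : F) := by simp [δ]
  refine ⟨_, hx ▸ K.starProjection_apply_mem y, (y - δ).2, ?_⟩
  rw [Subtype.coe_eta, map_sub, adjoint_apply_of_mem_orthogonal_range hT δ hδ, sub_zero]

end Adjoint

theorem IsClosed.mem_graph_of_mem_closure {R E F : Type*} [CommRing R]
    [AddCommGroup E] [Module R E] [TopologicalSpace E]
    [AddCommGroup F] [Module R F] [TopologicalSpace F] {S : E →ₗ.[R] F} (hS : S.IsClosed)
    {s : Set E} (hs : ∀ x ∈ s, (x, (0 : F)) ∈ S.graph) {x : E}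
    (hx : x ∈ _root_.closure s) : (x, (0 : F)) ∈ S.graph :=
  closure_minimal hs (hS.preimage (by fun_prop)) hx

end LinearPMap

theorem stmt_4_general {H₁ H₂ H₃ : Type*}
    [NormedAddCommGroup H₁] [InnerProductSpace ℝ H₁] [CompleteSpace H₁]
    [NormedAddCommGroup H₂] [InnerProductSpace ℝ H₂] [CompleteSpace H₂]
    [NormedAddCommGroup H₃] [InnerProductSpace ℝ H₃]
    (T : H₁ →ₗ.[ℝ] H₂) (S : H₂ →ₗ.[ℝ] H₃)
    (hTd : Dense (T.domain : Set H₁))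
    (hSc : S.IsClosed)
    (hST : ∀ x : T.domain, ∃ h : T x ∈ S.domain, S ⟨T x, h⟩ = 0)
    (F : Submodule ℝ H₂) (hF : IsClosed (F : Set H₂))
    (hTF : ∀ x : T.domain, T x ∈ F)
    (c : ℝ)
    (hineq : ∀ α : H₂, ∀ (h1 : α ∈ T.adjoint.domain) (h2 : α ∈ S.domain), α ∈ F →
      ‖α‖ ^ 2 ≤ c * (‖T.adjoint ⟨α, h1⟩‖ ^ 2 + ‖S ⟨α, h2⟩‖ ^ 2))
    (β : H₁) (hβ : ∃ γ : T.adjoint.domain, T.adjoint γ = β) :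
    ∃ (α : H₂) (hα : α ∈ T.adjoint.domain),
      T.adjoint ⟨α, hα⟩ = β ∧ ‖α‖ ≤ Real.sqrt c * ‖β‖ := by
  obtain ⟨γ, rfl⟩ := hβ
  obtain ⟨α, hαR, hα, hTα⟩ := T.exists_mem_closure_range_adjoint_apply_eq hTd γ
  have hS_range : ∀ y ∈ Set.range T, (y, 0) ∈ S.graph := by
    rintro _ ⟨x, rfl⟩
    obtain ⟨h, hx⟩ := hST x
    exact (S.image_iff h).mp hx.symm
  have hαS : (α, 0) ∈ S.graph := LinearPMap.IsClosed.mem_graph_of_mem_closure hSc hS_range hαR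
  have hαF : α ∈ F :=
    Submodule.topologicalClosure_minimal _ (by rintro _ ⟨x, rfl⟩; exact hTF x) hF hαR
  have hSα := (S.image_iff (S.mem_domain_of_mem_graph hαS)).mpr hαS
  have hest := hineq α hα (S.mem_domain_of_mem_graph hαS) hαF
  rw [hTα, ← hSα, norm_zero, zero_pow two_ne_zero, add_zero] at hest
  refine ⟨α, hα, hTα, ?_⟩
  calc ‖α‖ ≤ Real.sqrt (c * ‖T.adjoint γ‖ ^ 2) := Real.le_sqrt_of_sq_le hest
    _ = Real.sqrt c * ‖T.adjoint γ‖ := by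
      rw [Real.sqrt_mul' c (sq_nonneg _), Real.sqrt_sq (norm_nonneg _)]

/-- Hörmander: let `T : H₁ → H₂` and `S : H₂ → H₃` be closed densely defined
operators between Hilbert spaces with `S∘T = 0`, and let `F ⊆ H₂` be a closed subspace
containing the range of `T`.  If `‖α‖² ≤ c(‖T*α‖² + ‖Sα‖²)` for all
`α ∈ Dom(T*) ∩ Dom(S) ∩ F`, then every `β` in the range of `T*` has a preimage
`α ∈ Dom(T*)` with `T*α = β` and `‖α‖ ≤ √c·‖β‖`. -/
theorem stmt_4 {H₁ H₂ H₃ : Type*}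
    [NormedAddCommGroup H₁] [InnerProductSpace ℝ H₁] [CompleteSpace H₁]
    [NormedAddCommGroup H₂] [InnerProductSpace ℝ H₂] [CompleteSpace H₂]
    [NormedAddCommGroup H₃] [InnerProductSpace ℝ H₃] [CompleteSpace H₃]
    (T : H₁ →ₗ.[ℝ] H₂) (S : H₂ →ₗ.[ℝ] H₃)
    (hTd : Dense (T.domain : Set H₁)) (hSd : Dense (S.domain : Set H₂))
    (hTc : T.IsClosed) (hSc : S.IsClosed)
    (hST : ∀ x : T.domain, ∃ h : T x ∈ S.domain, S ⟨T x, h⟩ = 0)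
    (F : Submodule ℝ H₂) (hF : IsClosed (F : Set H₂))
    (hTF : ∀ x : T.domain, T x ∈ F)
    (c : ℝ) (hc : 0 < c)
    (hineq : ∀ α : H₂, ∀ (h1 : α ∈ T.adjoint.domain) (h2 : α ∈ S.domain), α ∈ F →
      ‖α‖ ^ 2 ≤ c * (‖T.adjoint ⟨α, h1⟩‖ ^ 2 + ‖S ⟨α, h2⟩‖ ^ 2))
    (β : H₁) (hβ : ∃ γ : T.adjoint.domain, T.adjoint γ = β) :
    ∃ (α : H₂) (hα : α ∈ T.adjoint.domain),
      T.adjoint ⟨α, hα⟩ = β ∧ ‖α‖ ≤ Real.sqrt c * ‖β‖ :=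
  stmt_4_general T S hTd hSc hST F hF hTF c hineq β hβ
end

section
/- Let T be a closed densely defined operator between Hilbert spaces H₁ and H₂. Suppose there exist a finite-dimensional subspace K ⊆ H₁ and a constant C > 0 such that C‖ψ‖² ≤ ‖Tψ‖² for all ψ ∈ Dom(T) with ψ ⊥ K. Then the range of T is closed in H₂. -/
/-!
On the graph of `T`, a Banach space, the map `(ψ, Tψ) ↦ Tψ` is bounded below on the closed
subspace cut out by `ψ ⊥ K`, so it maps that subspace onto a closed set. This subspace has finite
codimension (it is the kernel of the orthogonal projection onto `K`), and a linear map that sends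
a closed finite-codimensional subspace to a closed set has closed range.
-/

open scoped RealInnerProductSpace NNReal

section BoundedBelow

variable {𝕜 E F : Type*} [NontriviallyNormedField 𝕜]
  [NormedAddCommGroup E] [NormedSpace 𝕜 E] [CompleteSpace E]
  [NormedAddCommGroup F] [NormedSpace 𝕜 F]

theorem Submodule.isClosed_map_of_norm_le {s : Submodule 𝕜 E} (hs : IsClosed (s : Set E))
    (L : E →L[𝕜] F) (c : ℝ≥0) (hL : ∀ x ∈ s, ‖x‖ ≤ c * ‖L x‖) :
    IsClosed (s.map (L : E →ₗ[𝕜] F) : Set F) := by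
  have : CompleteSpace s := hs.completeSpace_coe
  have hanti : AntilipschitzWith c (L.comp s.subtypeL) :=
    (L.comp s.subtypeL).antilipschitz_of_bound fun x => hL x x.2
  have hrange := hanti.isClosed_range (L.comp s.subtypeL).uniformContinuous
  rwa [ContinuousLinearMap.coe_comp, Set.range_comp, Submodule.coe_subtypeL,
    Submodule.coe_subtype, Subtype.range_coe] at hrange

theorem ContinuousLinearMap.isClosed_range_of_norm_le_on_ker [CompleteSpace 𝕜]
    {G : Type*} [NormedAddCommGroup G] [NormedSpace 𝕜 G] [FiniteDimensional 𝕜 G]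
    (L : E →L[𝕜] F) (Q : E →L[𝕜] G) (c : ℝ≥0)
    (hL : ∀ x ∈ LinearMap.ker (Q : E →ₗ[𝕜] G), ‖x‖ ≤ c * ‖L x‖) :
    IsClosed (Set.range L) := by
  have := Submodule.CoFG.ker (Q : E →ₗ[𝕜] G)
  exact (L : E →ₗ[𝕜] F).isClosed_range_of_isClosed_map_of_finiteDimensional_quotient
    (Submodule.isClosed_map_of_norm_le Q.isClosed_ker L c hL)

end BoundedBelow

theorem LinearPMap.IsClosed.isClosed_range_of_norm_le_on_ker {𝕜 E F G : Type*}
    [NontriviallyNormedField 𝕜] [CompleteSpace 𝕜]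
    [NormedAddCommGroup E] [NormedSpace 𝕜 E] [CompleteSpace E]
    [NormedAddCommGroup F] [NormedSpace 𝕜 F] [CompleteSpace F]
    [NormedAddCommGroup G] [NormedSpace 𝕜 G] [FiniteDimensional 𝕜 G]
    {T : E →ₗ.[𝕜] F} (hT : T.IsClosed) (Q : E →L[𝕜] G) (c : ℝ)
    (hTQ : ∀ ψ : T.domain, Q ψ = 0 → ‖(ψ : E)‖ ≤ c * ‖T ψ‖) :
    _root_.IsClosed (Set.range fun ψ : T.domain => T ψ) := by
  have : CompleteSpace T.graph := hT.completeSpace_coe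
  let fst : T.graph →L[𝕜] E := (ContinuousLinearMap.fst 𝕜 E F).comp T.graph.subtypeL
  let snd : T.graph →L[𝕜] F := (ContinuousLinearMap.snd 𝕜 E F).comp T.graph.subtypeL
  have hrange : Set.range snd = Set.range fun ψ : T.domain => T ψ := by
    ext y
    constructor
    · rintro ⟨⟨p, hp⟩, rfl⟩
      obtain ⟨ψ, -, hψ⟩ := T.mem_graph_iff.1 hp
      exact ⟨ψ, hψ⟩
    · rintro ⟨ψ, rfl⟩
      exact ⟨⟨_, T.mem_graph ψ⟩, rfl⟩
  rw [← hrange]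
  refine snd.isClosed_range_of_norm_le_on_ker (Q.comp fst) (max c 1).toNNReal ?_
  rintro ⟨p, hp⟩ hQp
  obtain ⟨ψ, hψ₁, hψ₂⟩ := T.mem_graph_iff.1 hp
  have hψ := hTQ ψ (hψ₁ ▸ hQp)
  rw [Real.coe_toNNReal _ (le_max_of_le_right zero_le_one)]
  change ‖p‖ ≤ max c 1 * ‖p.2‖
  refine norm_prod_le_iff.2 ⟨?_, le_mul_of_one_le_left (norm_nonneg _) (le_max_right _ _)⟩
  calc ‖p.1‖ = ‖(ψ : E)‖ := by rw [hψ₁]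
    _ ≤ c * ‖T ψ‖ := hψ
    _ ≤ max c 1 * ‖p.2‖ := by rw [hψ₂]; gcongr; exact le_max_left _ _

theorem stmt_6_general {H₁ H₂ : Type*}
    [NormedAddCommGroup H₁] [InnerProductSpace ℝ H₁] [CompleteSpace H₁]
    [NormedAddCommGroup H₂] [InnerProductSpace ℝ H₂] [CompleteSpace H₂]
    (T : H₁ →ₗ.[ℝ] H₂) (hTc : T.IsClosed)
    (K : Submodule ℝ H₁) (hK : FiniteDimensional ℝ K)
    (C : ℝ) (hC : 0 < C)
    (h : ∀ ψ : T.domain, (∀ k ∈ K, ⟪(ψ : H₁), k⟫ = 0) →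
      C * ‖(ψ : H₁)‖ ^ 2 ≤ ‖T ψ‖ ^ 2) :
    IsClosed (Set.range fun ψ : T.domain => T ψ) := by
  refine hTc.isClosed_range_of_norm_le_on_ker K.orthogonalProjectionOnto (√C)⁻¹ fun ψ hψK => ?_
  have hψ : C * ‖(ψ : H₁)‖ ^ 2 ≤ ‖T ψ‖ ^ 2 :=
    h ψ ((K.mem_orthogonal' _).1 (Submodule.orthogonalProjectionOnto_eq_zero_iff.1 hψK))
  have hsqrt : √C * ‖(ψ : H₁)‖ ≤ ‖T ψ‖ := by
    rw [← Real.sqrt_sq (norm_nonneg (T ψ)), ← Real.sqrt_sq (norm_nonneg (ψ : H₁)),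
      ← Real.sqrt_mul hC.le]
    exact Real.sqrt_le_sqrt hψ
  rwa [inv_mul_eq_div, le_div_iff₀ (Real.sqrt_pos.2 hC), mul_comm]

/-- let `T` be a closed densely defined operator between Hilbert spaces.
If there are a finite-dimensional subspace `K ⊆ H₁` and a constant `C > 0` with
`C‖ψ‖² ≤ ‖Tψ‖²` for all `ψ ∈ Dom(T)` orthogonal to `K`, then the range of `T` is closed. -/
theorem stmt_6 {H₁ H₂ : Type*}
    [NormedAddCommGroup H₁] [InnerProductSpace ℝ H₁] [CompleteSpace H₁]
    [NormedAddCommGroup H₂] [InnerProductSpace ℝ H₂] [CompleteSpace H₂]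
    (T : H₁ →ₗ.[ℝ] H₂) (hTc : T.IsClosed) (hTd : Dense (T.domain : Set H₁))
    (K : Submodule ℝ H₁) (hK : FiniteDimensional ℝ K)
    (C : ℝ) (hC : 0 < C)
    (h : ∀ ψ : T.domain, (∀ k ∈ K, ⟪(ψ : H₁), k⟫ = 0) →
      C * ‖(ψ : H₁)‖ ^ 2 ≤ ‖T ψ‖ ^ 2) :
    IsClosed (Set.range fun ψ : T.domain => T ψ) :=
  stmt_6_general T hTc K hK C hC h
end
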